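/- arXiv:0707.0009 — 6 statements merged into one kernel-verified Lean document; each statement's English description precedes it below -/
import Mathlib

section
/- Let G be a locally compact group with left Haar measure. If there exists a strictly positive measurable function u : G → (0,∞) such that (u * u)(x) is finite for some x ∈ G, then G is σ-compact. -/
/-!
The integrand `y ↦ u y * u (y⁻¹ * x)` of a finite self-convolution is a strictly positive function
with finite integral, so the Haar measure is σ-finite. The subgroup generated by a compact
neighbourhood of `1` is open and σ-compact; its cosets are disjoint open sets of positive measure,
so σ-finiteness leaves only countably many of them, and `G` is a countable union of σ-compact
translates.
-/

open MeasureTheory ENNReal Set Pointwise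

theorem MeasureTheory.sigmaFinite_of_lintegral_ne_top {α : Type*} [MeasurableSpace α]
    {μ : Measure α} {f : α → ℝ≥0∞} (hf : AEMeasurable f μ) (hf_ne_zero : ∀ᵐ x ∂μ, f x ≠ 0)
    (hint : ∫⁻ x, f x ∂μ ≠ ∞) : SigmaFinite μ := by
  have := isFiniteMeasure_withDensity hint
  have hf_ne_top : ∀ᵐ x ∂μ, f x ≠ ∞ := (ae_lt_top' hf hint).mono fun _ => LT.lt.ne
  rw [← withDensity_inv_same₀ hf hf_ne_zero hf_ne_top]
  have hf_ne_zero' : ∀ᵐ x ∂μ.withDensity f, f x ≠ 0 :=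
    (withDensity_absolutelyContinuous μ f).ae_le hf_ne_zero
  exact SigmaFinite.withDensity_of_ne_top (hf_ne_zero'.mono fun _ => ENNReal.inv_ne_top.2)

theorem Submonoid.coe_closure_eq_iUnion_pow {M : Type*} [Monoid M] (s : Set M) :
    (Submonoid.closure s : Set M) = ⋃ n : ℕ, s ^ n := by
  refine (iUnion_subset fun n => pow_subset subset_closure).antisymm' fun x hx => ?_
  induction hx using Submonoid.closure_induction with
  | mem x hx => exact mem_iUnion.2 ⟨1, by rwa [pow_one]⟩
  | one => exact mem_iUnion.2 ⟨0, by rw [pow_zero]; rfl⟩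
  | mul x y _ _ hx hy =>
    obtain ⟨m, hm⟩ := mem_iUnion.1 hx
    obtain ⟨n, hn⟩ := mem_iUnion.1 hy
    exact mem_iUnion.2 ⟨m + n, pow_add s m n ▸ mul_mem_mul hm hn⟩

theorem IsCompact.pow {M : Type*} [Monoid M] [TopologicalSpace M] [ContinuousMul M] {s : Set M}
    (hs : IsCompact s) (n : ℕ) : IsCompact (s ^ n) := by
  induction n with
  | zero => simp
  | succ n ih => rw [pow_succ]; exact ih.mul hs

section TopologicalGroup

variable {G : Type*} [Group G] [TopologicalSpace G] [IsTopologicalGroup G]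

theorem IsCompact.isSigmaCompact_subgroupClosure {K : Set G} (hK : IsCompact K) :
    IsSigmaCompact (Subgroup.closure K : Set G) := by
  rw [← Subgroup.coe_toSubmonoid, Subgroup.closure_toSubmonoid,
    Submonoid.coe_closure_eq_iUnion_pow]
  exact isSigmaCompact_iUnion_of_isCompact _ fun n => (hK.union hK.inv).pow n

theorem Subgroup.countable_quotient_of_isOpen [MeasurableSpace G] [OpensMeasurableSpace G]
    (μ : Measure G) [SigmaFinite μ] [μ.IsOpenPosMeasure] {H : Subgroup G}
    (hH : IsOpen (H : Set G)) : Countable (G ⧸ H) := by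
  have := QuotientGroup.discreteTopology hH
  have hopen (q : G ⧸ H) : IsOpen (QuotientGroup.mk ⁻¹' {q} : Set G) :=
    (isOpen_discrete {q}).preimage continuous_quot_mk
  rw [← Set.countable_univ_iff]
  convert Measure.countable_meas_pos_of_disjoint_iUnion (μ := μ)
    (fun q => (hopen q).measurableSet) fun p q hpq => (disjoint_singleton.2 hpq).preimage _
  exact (eq_univ_of_forall fun q => (hopen q).measure_pos μ (QuotientGroup.mk_surjective q)).symm

theorem sigmaCompactSpace_of_countable_quotient {H : Subgroup G}
    (hH : IsSigmaCompact (H : Set G)) [Countable (G ⧸ H)] : SigmaCompactSpace G := by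
  rw [← isSigmaCompact_univ_iff, QuotientGroup.univ_eq_iUnion_smul H]
  exact isSigmaCompact_iUnion _ fun q => hH.image (continuous_const_smul q.out)

theorem sigmaCompactSpace_of_sigmaFinite [WeaklyLocallyCompactSpace G] [MeasurableSpace G]
    [OpensMeasurableSpace G] (μ : Measure G) [SigmaFinite μ] [μ.IsOpenPosMeasure] :
    SigmaCompactSpace G := by
  obtain ⟨K, hK, hK1⟩ := exists_compact_mem_nhds (1 : G)
  have hopen : IsOpen (Subgroup.closure K : Set G) :=
    Subgroup.isOpen_of_mem_nhds _ (Filter.mem_of_superset hK1 Subgroup.subset_closure)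
  have := Subgroup.countable_quotient_of_isOpen μ hopen
  exact sigmaCompactSpace_of_countable_quotient hK.isSigmaCompact_subgroupClosure

end TopologicalGroup

theorem sigmaCompact_of_finite_self_convolution {G : Type*} [Group G] [TopologicalSpace G]
    [IsTopologicalGroup G] [LocallyCompactSpace G] [MeasurableSpace G] [BorelSpace G]
    (μ : Measure G) [μ.IsHaarMeasure] (u : G → ℝ≥0∞) (hu : Measurable u)
    (hpos : ∀ x, 0 < u x)
    (hfin : ∃ x : G, (∫⁻ y, u y * u (y⁻¹ * x) ∂μ) < ⊤) :
    SigmaCompactSpace G := by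
  obtain ⟨x, hx⟩ := hfin
  have : SigmaFinite μ :=
    sigmaFinite_of_lintegral_ne_top (hu.mul (hu.comp (measurable_inv.mul_const x))).aemeasurable
      (ae_of_all _ fun y => (ENNReal.mul_pos (hpos y).ne' (hpos _).ne').ne') hx.ne
  exact sigmaCompactSpace_of_sigmaFinite μ
end

section
/- Let G be a locally compact group with left Haar measure, p ≥ 1, and w : G → (0,∞) a measurable weight such that the weighted space L_p^w(G) = {f : fw ∈ L^p(G)} is closed under convolution. Then w^p is locally integrable, i.e. ∫_K w^p < ∞ for every compact K ⊆ G. -/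
/-!
Fix `s₀`. Near `s₀` take a set `A` of positive finite measure on which `w` is bounded, and a part
`B ⊆ A` of positive measure on which `y ↦ w (y⁻¹ * s₀)` is bounded too. Then `f = 1_A` and
`g = 1_E` with `E = (s₀⁻¹ • B)⁻¹` lie in `L_p^w`, and `(f * g) s = μ (A ∩ (s * s₀⁻¹) • B)`.
As translation is continuous in measure, this stays above `μ B / 2` for `s` near `s₀`, so there
`w ≤ 2 |(f * g) w| / μ B` and `w` is `p`-integrable near `s₀`; compactness of `K` does the rest.
-/

open MeasureTheory Measure ENNReal NNReal Set Filter Topology Pointwise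

section MeasureSpace

variable {α : Type*} [MeasurableSpace α] {μ : Measure α}

theorem exists_nat_measure_inter_setOf_le_ne_zero {S : Set α} (hS : μ S ≠ 0) (v : α → ℝ) :
    ∃ n : ℕ, μ (S ∩ {x | v x ≤ n}) ≠ 0 := by
  have hcover : S = ⋃ n : ℕ, S ∩ {x | v x ≤ n} := by
    rw [← inter_iUnion, eq_comm, inter_eq_left]
    exact fun x _ ↦ mem_iUnion.mpr (exists_nat_ge (v x))
  obtain ⟨n, hn⟩ := exists_measure_pos_of_not_measure_iUnion_null (hcover ▸ hS)
  exact ⟨n, hn.ne'⟩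

theorem memLp_indicator_one_mul {A : Set α} (hA : MeasurableSet A) (hA' : μ A ≠ ∞)
    {w : α → ℝ} (hw : AEStronglyMeasurable w μ) {C : ℝ} (hC : ∀ x ∈ A, ‖w x‖ ≤ C)
    (p : ℝ≥0∞) : MemLp (fun x ↦ A.indicator 1 x * w x) p μ := by
  have : IsFiniteMeasure (μ.restrict A) := isFiniteMeasure_restrict.mpr hA'
  have hAw : (fun x ↦ A.indicator 1 x * w x) = A.indicator w := by
    ext x
    rw [← indicator_mul_left, Pi.one_def]
    simp only [one_mul]
  rw [hAw, memLp_indicator_iff_restrict hA]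
  exact MemLp.of_bound hw.restrict C (ae_restrict_of_forall_mem hA hC)

theorem memLp_restrict_of_le_norm_mul {p : ℝ≥0∞} {h w : α → ℝ}
    (hhw : MemLp (fun x ↦ h x * w x) p μ) (hw : AEStronglyMeasurable w μ) {T : Set α}
    (hT : MeasurableSet T) {c : ℝ} (hc : 0 < c) (hcT : ∀ x ∈ T, c ≤ ‖h x‖) :
    MemLp w p (μ.restrict T) := by
  refine (hhw.restrict T).of_le_mul (c := c⁻¹) hw.restrict
    (ae_restrict_of_forall_mem hT fun x hx ↦ ?_)
  rw [norm_mul, le_inv_mul_iff₀ hc]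
  gcongr
  exact hcT x hx

end MeasureSpace

section MeasurableGroup

variable {G : Type*} [Group G] [MeasurableSpace G] (μ : Measure G)

theorem measure_le_measure_inter_smul_add [MeasurableMul G] [IsMulLeftInvariant μ]
    {A B : Set G} (hBA : B ⊆ A) (g : G) : μ B ≤ μ (A ∩ g • B) + μ (g • A \ A) :=
  calc μ B = μ (g • B) := (measure_smul μ g B).symm
    _ ≤ μ (g • B ∩ A) + μ (g • B \ A) := measure_le_inter_add_sdiff μ _ _
    _ ≤ μ (A ∩ g • B) + μ (g • A \ A) := by
      rw [inter_comm]
      gcongr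

theorem integral_indicator_one_mul_indicator_one_inv_mul [MeasurableMul G] [MeasurableInv G]
    {A E : Set G} (hA : MeasurableSet A) (hE : MeasurableSet E) (s : G) :
    ∫ t, A.indicator 1 t * E.indicator (1 : G → ℝ) (t⁻¹ * s) ∂μ = μ.real (A ∩ s • E⁻¹) := by
  have hcomp : (fun t ↦ E.indicator (1 : G → ℝ) (t⁻¹ * s)) = (s • E⁻¹).indicator 1 := by
    ext t
    have hmem : t ∈ s • E⁻¹ ↔ t⁻¹ * s ∈ E := by
      rw [mem_smul_set_iff_inv_smul_mem, Set.mem_inv, smul_eq_mul, mul_inv_rev, inv_inv]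
    by_cases ht : t⁻¹ * s ∈ E <;> simp [ht, hmem]
  rw [← integral_indicator_one (hA.inter (hE.inv.const_smul s)), inter_indicator_one, ← hcomp]
  rfl

end MeasurableGroup

section LocallyCompactGroup

variable {G : Type*} [Group G] [TopologicalSpace G] [IsTopologicalGroup G] [LocallyCompactSpace G]
  [MeasurableSpace G] [BorelSpace G]

theorem tendsto_measure_smul_sdiff_of_measurableSet (μ : Measure G) [IsMulLeftInvariant μ]
    [IsFiniteMeasureOnCompacts μ] [InnerRegularCompactLTTop μ] {A : Set G}
    (hA : MeasurableSet A) (hA' : μ A ≠ ∞) :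
    Tendsto (fun g : G ↦ μ (g • A \ A)) (𝓝 1) (𝓝 0) := by
  refine ENNReal.tendsto_nhds_zero.mpr fun ε hε ↦ ?_
  have hε2 : ε / 2 ≠ 0 := (ENNReal.half_pos hε.ne').ne'
  obtain ⟨C, hCA, hC, hC', hAC⟩ := hA.exists_isCompact_isClosed_sdiff_lt hA' hε2
  filter_upwards [eventually_nhds_one_measure_smul_sdiff_lt (μ := μ) hC hC' hε2] with g hg
  have hsub : g • A \ A ⊆ g • (A \ C) ∪ (g • C \ C) := by
    rw [smul_set_sdiff]
    rintro x ⟨hxA, hx⟩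
    by_cases hxC : x ∈ g • C
    · exact Or.inr ⟨hxC, fun hxC' ↦ hx (hCA hxC')⟩
    · exact Or.inl ⟨hxA, hxC⟩
  calc μ (g • A \ A) ≤ μ (g • (A \ C)) + μ (g • C \ C) :=
        (measure_mono hsub).trans (measure_union_le _ _)
    _ ≤ ε / 2 + ε / 2 := by
        rw [measure_smul]
        exact add_le_add hAC.le hg.le
    _ = ε := ENNReal.add_halves ε

theorem tendsto_measure_smul_sdiff_of_isCompact_closure (μ : Measure G) [IsMulLeftInvariant μ]
    [IsFiniteMeasureOnCompacts μ] {A : Set G} (hA : MeasurableSet A)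
    (hA' : IsCompact (closure A)) :
    Tendsto (fun g : G ↦ μ (g • A \ A)) (𝓝 1) (𝓝 0) := by
  -- On sets with compact closure, `μ` is a multiple of the inner regular measure `haar`.
  have hμ (g : G) : μ (g • A \ A) = haarScalarFactor μ haar * haar (g • A \ A) := by
    rw [measure_isMulInvariant_eq_smul_of_isCompact_closure μ haar
      ((hA'.smul g).closure_of_subset (sdiff_subset.trans (smul_set_mono subset_closure))),
      ENNReal.smul_def, smul_eq_mul]
  simp_rw [hμ]
  simpa using ENNReal.Tendsto.const_mul (tendsto_measure_smul_sdiff_of_measurableSet haar hA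
    (measure_mono subset_closure |>.trans_lt hA'.measure_lt_top).ne) (Or.inr coe_ne_top)

theorem eventually_lt_measure_inter_smul (μ : Measure G) [IsMulLeftInvariant μ]
    [IsFiniteMeasureOnCompacts μ] {A B : Set G} (hA : MeasurableSet A)
    (hA' : IsCompact (closure A)) (hBA : B ⊆ A) {c : ℝ≥0∞} (hc : c < μ B) :
    ∀ᶠ g in 𝓝 (1 : G), c < μ (A ∩ g • B) := by
  have hcB : μ B - c ≠ 0 := (tsub_pos_of_lt hc).ne'
  filter_upwards [(tendsto_measure_smul_sdiff_of_isCompact_closure μ hA hA').eventually_lt_const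
    (pos_iff_ne_zero.mpr hcB)] with g hg
  by_contra! hle
  have := calc μ B ≤ μ (A ∩ g • B) + μ (g • A \ A) := measure_le_measure_inter_smul_add μ hBA g
    _ < c + (μ B - c) :=
        ENNReal.add_lt_add_of_le_of_lt (hle.trans_lt (hc.trans_le le_top)).ne hle hg
    _ = μ B := add_tsub_cancel_of_le hc.le
  exact this.false

theorem exists_pos_eventually_le_integral_indicator_mul_indicator (μ : Measure G)
    [IsMulLeftInvariant μ] [IsFiniteMeasureOnCompacts μ] {A B : Set G} (hA : MeasurableSet A)
    (hA' : IsCompact (closure A)) (hB : MeasurableSet B) (hBA : B ⊆ A) (hB0 : μ B ≠ 0) (s₀ : G) :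
    ∃ c > 0, ∀ᶠ s in 𝓝 s₀,
      c ≤ ∫ t, A.indicator 1 t * (s₀⁻¹ • B)⁻¹.indicator (1 : G → ℝ) (t⁻¹ * s) ∂μ := by
  have hAfin : μ A ≠ ∞ := (measure_mono subset_closure |>.trans_lt hA'.measure_lt_top).ne
  have hBhalf : μ B / 2 < μ B :=
    ENNReal.half_lt_self hB0 (ne_top_of_le_ne_top hAfin (measure_mono hBA))
  have hs₀ : Tendsto (fun s ↦ s * s₀⁻¹) (𝓝 s₀) (𝓝 1) := by
    simpa using (continuous_mul_const s₀⁻¹).tendsto s₀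
  refine ⟨(μ B / 2).toReal, ENNReal.toReal_pos (ENNReal.half_pos hB0).ne'
    (hBhalf.trans_le le_top).ne, ?_⟩
  filter_upwards [hs₀.eventually (eventually_lt_measure_inter_smul μ hA hA' hBA hBhalf)] with s hs
  rw [integral_indicator_one_mul_indicator_one_inv_mul μ hA (hB.const_smul _).inv, inv_inv,
    smul_smul]
  exact ENNReal.toReal_mono (ne_top_of_le_ne_top hAfin (measure_mono inter_subset_left)) hs.le

def WeightedLpClosedUnderConvolution (μ : Measure G) (p : ℝ≥0∞) (w : G → ℝ) : Prop :=
  ∀ f g : G → ℝ, MemLp (fun x ↦ f x * w x) p μ → MemLp (fun x ↦ g x * w x) p μ →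
    MemLp (fun s ↦ (∫ t, f t * g (t⁻¹ * s) ∂μ) * w s) p μ

theorem WeightedLpClosedUnderConvolution.exists_mem_nhds_memLp_restrict {μ : Measure G}
    [IsMulLeftInvariant μ] [IsFiniteMeasureOnCompacts μ] [IsOpenPosMeasure μ] {p : ℝ≥0∞}
    {w : G → ℝ} (halg : WeightedLpClosedUnderConvolution μ p w) (hw : Measurable w) (s₀ : G) :
    ∃ T ∈ 𝓝 s₀, MemLp w p (μ.restrict T) := by
  obtain ⟨L, hL, hLs₀⟩ := exists_compact_mem_nhds s₀
  have hU0 : μ (interior L) ≠ 0 :=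
    (isOpen_interior.measure_pos μ ⟨s₀, mem_interior_iff_mem_nhds.mpr hLs₀⟩).ne'
  obtain ⟨M, hM⟩ := exists_nat_measure_inter_setOf_le_ne_zero hU0 (‖w ·‖)
  set A := interior L ∩ {x | ‖w x‖ ≤ M}
  obtain ⟨n, hn⟩ := exists_nat_measure_inter_setOf_le_ne_zero hM (fun y ↦ ‖w (y⁻¹ * s₀)‖)
  set B := A ∩ {y | ‖w (y⁻¹ * s₀)‖ ≤ n}
  have hA : MeasurableSet A :=
    isOpen_interior.measurableSet.inter (measurableSet_le hw.norm measurable_const)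
  have hB : MeasurableSet B :=
    hA.inter (measurableSet_le (hw.comp (measurable_inv.mul_const s₀)).norm measurable_const)
  have hA' : IsCompact (closure A) :=
    hL.closure_of_subset (inter_subset_left.trans interior_subset)
  have hf : MemLp (fun x ↦ A.indicator 1 x * w x) p μ :=
    memLp_indicator_one_mul hA (measure_mono subset_closure |>.trans_lt hA'.measure_lt_top).ne
      hw.aestronglyMeasurable (fun x hx ↦ hx.2) p
  have hg : MemLp (fun x ↦ (s₀⁻¹ • B)⁻¹.indicator 1 x * w x) p μ := by
    refine memLp_indicator_one_mul (hB.const_smul _).inv ?_ hw.aestronglyMeasurable (C := n) ?_ p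
    · exact ((hA'.smul _).inv.measure_lt_top.trans_le' (measure_mono
        (inv_subset_inv.mpr (smul_set_mono (inter_subset_left.trans subset_closure))))).ne
    · intro x hx
      rw [Set.mem_inv, mem_smul_set_iff_inv_smul_mem, inv_inv, smul_eq_mul] at hx
      simpa using hx.2
  obtain ⟨c, hc, hconv⟩ :=
    exists_pos_eventually_le_integral_indicator_mul_indicator μ hA hA' hB inter_subset_left hn s₀
  obtain ⟨T, hcT, hT, hs₀T⟩ := eventually_nhds_iff.mp hconv
  exact ⟨T, hT.mem_nhds hs₀T, memLp_restrict_of_le_norm_mul (halg _ _ hf hg)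
    hw.aestronglyMeasurable hT.measurableSet hc fun s hs ↦ (hcT s hs).trans (le_abs_self _)⟩

end LocallyCompactGroup

theorem weight_pow_locally_integrable_of_algebra {G : Type*} [Group G] [TopologicalSpace G]
    [IsTopologicalGroup G] [LocallyCompactSpace G] [MeasurableSpace G] [BorelSpace G]
    (μ : Measure G) [μ.IsHaarMeasure] (p : ℝ) (hp : 1 ≤ p)
    (w : G → ℝ) (hw : Measurable w) (hwpos : ∀ x, 0 < w x)
    (halg : ∀ f g : G → ℝ,
      MemLp (fun x => f x * w x) (ENNReal.ofReal p) μ →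
      MemLp (fun x => g x * w x) (ENNReal.ofReal p) μ →
      MemLp (fun s => (∫ t, f t * g (t⁻¹ * s) ∂μ) * w s) (ENNReal.ofReal p) μ) :
    ∀ K : Set G, IsCompact K → (∫⁻ x in K, ENNReal.ofReal (w x ^ p) ∂μ) < ⊤ := by
  intro K hK
  have hp0 : 0 < p := zero_lt_one.trans_le hp
  have hloc : LocallyIntegrable (fun x ↦ w x ^ p) μ := fun s₀ ↦ by
    obtain ⟨T, hT, hwT⟩ :=
      WeightedLpClosedUnderConvolution.exists_mem_nhds_memLp_restrict halg hw s₀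
    refine ⟨T, hT, ?_⟩
    simpa [IntegrableOn, toReal_ofReal hp0.le, Real.norm_of_nonneg (hwpos _).le] using
      hwT.integrable_norm_rpow (ofReal_pos.mpr hp0).ne' ofReal_ne_top
  have hK := (hloc.integrableOn_isCompact hK).hasFiniteIntegral
  rwa [hasFiniteIntegral_iff_ofReal (ae_of_all _ fun x ↦ Real.rpow_nonneg (hwpos x).le p)] at hK
end

section
/- Let G be a locally compact group and L : G → (0,∞) a measurable submultiplicative function, i.e. L(st) ≤ L(s)L(t) for all s,t ∈ G. Then L is bounded above and bounded away from zero on every compact subset of G. -/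
/-!
Some sublevel set `E = {x | L x ≤ n, L x⁻¹ ≤ n}` meets a small open neighbourhood of `1` in a set
of positive finite Haar measure, so by Steinhaus' theorem `E / E` is a neighbourhood of `1`, on
which `L ≤ n²` by submultiplicativity. Finitely many translates of it cover a compact `K`, which
bounds `L` above on `K`; the bound below follows from `L 1 ≤ L x * L x⁻¹` and the bound above
on `K⁻¹`.
-/

open MeasureTheory Set Pointwise Topology

lemma exists_nat_measure_inter_setOf_le_pos {α : Type*} [MeasurableSpace α] {μ : Measure α}
    {s : Set α} (hs : μ s ≠ 0) (f : α → ℝ) : ∃ n : ℕ, 0 < μ (s ∩ {x | f x ≤ n}) := by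
  have hcover : (⋃ n : ℕ, {x | f x ≤ n}) = univ :=
    iUnion_eq_univ_iff.2 fun x => exists_nat_ge (f x)
  refine exists_measure_pos_of_not_measure_iUnion_null ?_
  rwa [← inter_iUnion, hcover, inter_univ]

section Submultiplicative

variable {G : Type*} [Group G] [TopologicalSpace G] [IsTopologicalGroup G] {L : G → ℝ}

lemma bddAbove_image_of_bddAbove_image_nhds_one (hnonneg : ∀ x, 0 ≤ L x)
    (hsub : ∀ s t : G, L (s * t) ≤ L s * L t) {W : Set G} (hW : W ∈ 𝓝 1)
    (hbdd : BddAbove (L '' W)) {K : Set G} (hK : IsCompact K) : BddAbove (L '' K) := by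
  obtain ⟨C, hC⟩ := hbdd
  obtain ⟨t, -, hKt⟩ :=
    hK.elim_nhds_subcover (fun x => x • W) fun x _ => by simpa using smul_mem_nhds_smul x hW
  refine BddAbove.mono (image_mono hKt) ?_
  rw [image_iUnion₂]
  refine t.finite_toSet.bddAbove_biUnion.2 fun x _ => ⟨L x * C, ?_⟩
  rintro _ ⟨_, ⟨w, hw, rfl⟩, rfl⟩
  calc L (x • w) ≤ L x * L w := hsub x w
    _ ≤ L x * C := mul_le_mul_of_nonneg_left (hC ⟨w, hw, rfl⟩) (hnonneg x)

variable [LocallyCompactSpace G] [MeasurableSpace G] [BorelSpace G]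

lemma exists_mem_nhds_one_bddAbove_image (hL : Measurable L) (hnonneg : ∀ x, 0 ≤ L x)
    (hsub : ∀ s t : G, L (s * t) ≤ L s * L t) : ∃ W ∈ 𝓝 (1 : G), BddAbove (L '' W) := by
  let μ := Measure.haar (G := G)
  obtain ⟨U, h1U, hU, hUfin⟩ := μ.exists_isOpen_measure_lt_top 1
  obtain ⟨n, hn⟩ := exists_nat_measure_inter_setOf_le_pos (hU.measure_ne_zero μ ⟨1, h1U⟩)
    fun x => max (L x) (L x⁻¹)
  set E := U ∩ {x | max (L x) (L x⁻¹) ≤ n}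
  have hE : MeasurableSet E :=
    hU.measurableSet.inter (measurableSet_le (hL.max (hL.comp measurable_inv)) measurable_const)
  have hEfin : μ E ≠ ⊤ := (measure_lt_top_of_subset inter_subset_left hUfin.ne).ne
  refine ⟨E / E, Measure.div_mem_nhds_one_of_haar_pos_ne_top μ E hE hn hEfin, n * n, ?_⟩
  rintro _ ⟨_, ⟨a, ha, b, hb, rfl⟩, rfl⟩
  calc L (a / b) = L (a * b⁻¹) := by rw [div_eq_mul_inv]
    _ ≤ L a * L b⁻¹ := hsub a b⁻¹
    _ ≤ n * n := mul_le_mul (le_of_max_le_left ha.2) (le_of_max_le_right hb.2) (hnonneg _)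
        n.cast_nonneg

lemma bddAbove_image_of_measurable_of_submultiplicative (hL : Measurable L)
    (hnonneg : ∀ x, 0 ≤ L x) (hsub : ∀ s t : G, L (s * t) ≤ L s * L t) {K : Set G}
    (hK : IsCompact K) : BddAbove (L '' K) :=
  have ⟨_, hW, hbdd⟩ := exists_mem_nhds_one_bddAbove_image hL hnonneg hsub
  bddAbove_image_of_bddAbove_image_nhds_one hnonneg hsub hW hbdd hK

end Submultiplicative

lemma div_apply_inv_le_of_submultiplicative {G : Type*} [Group G] {L : G → ℝ}
    (hpos : ∀ x, 0 < L x) (hsub : ∀ s t : G, L (s * t) ≤ L s * L t) (x : G) :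
    L 1 / L x⁻¹ ≤ L x := by
  rw [div_le_iff₀ (hpos _)]
  simpa using hsub x x⁻¹

theorem submultiplicative_bounded_on_compact {G : Type*} [Group G] [TopologicalSpace G]
    [IsTopologicalGroup G] [LocallyCompactSpace G] [MeasurableSpace G] [BorelSpace G]
    (L : G → ℝ) (hL : Measurable L) (hpos : ∀ x, 0 < L x)
    (hsub : ∀ s t : G, L (s * t) ≤ L s * L t) :
    ∀ K : Set G, IsCompact K → ∃ a b : ℝ, 0 < a ∧ ∀ x ∈ K, a ≤ L x ∧ L x ≤ b := by
  intro K hK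
  have hnonneg x := (hpos x).le
  obtain ⟨b, hb⟩ := bddAbove_image_of_measurable_of_submultiplicative hL hnonneg hsub hK
  obtain ⟨c, hc1, hc⟩ :=
    (bddAbove_image_of_measurable_of_submultiplicative hL hnonneg hsub hK.inv).exists_ge 1
  refine ⟨L 1 / c, b, div_pos (hpos 1) (by linarith), fun x hx => ⟨?_, hb ⟨x, hx, rfl⟩⟩⟩
  calc L 1 / c ≤ L 1 / L x⁻¹ :=
        div_le_div_of_nonneg_left (hpos 1).le (hpos _) (hc _ ⟨x⁻¹, inv_mem_inv.2 hx, rfl⟩)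
    _ ≤ L x := div_apply_inv_le_of_submultiplicative hpos hsub x
end

section
/- Let G be a locally compact group with left Haar measure and w : G → (0,∞) a measurable weight. Define L_s = ess sup_t w(st)/w(t). If the set S = {s ∈ G : L_s < ∞} has locally full measure (its complement is locally null), then S = G, i.e. L_s < ∞ for every s ∈ G. -/
/-!
Left invariance of the essential supremum gives `L (s * t) ≤ L s * L t`, so `S` is closed under
multiplication. On the other hand, a set `S` whose complement is locally null satisfies
`S * S = G`: for `g : G` the sets `Sᶜ` and `g • (Sᶜ)⁻¹` are locally null, so some `x` avoids
both, and then `g = x * (x⁻¹ * g)` with both factors in `S`.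

The only analytic input is that inversion preserves locally null sets. For a regular Haar
measure `μ`, the right Haar measure `μ.inv` integrates compactly supported continuous functions
against a continuous density with respect to `μ`; near a compact set this bounds `μ.inv` by a
multiple of `μ`, and outer regularity of `μ` finishes. Any Haar measure has the same locally
null sets as a regular one.
-/

open MeasureTheory Measure Set Filter Topology
open scoped ENNReal NNReal Pointwise

def IsLocallyNull {X : Type*} [TopologicalSpace X] [MeasurableSpace X] (μ : Measure X)
    (A : Set X) : Prop :=
  ∀ K, IsCompact K → μ (K ∩ A) = 0

section IsLocallyNull

variable {X : Type*} [TopologicalSpace X] [MeasurableSpace X] {μ : Measure X} {A B : Set X}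

theorem IsLocallyNull.union (hA : IsLocallyNull μ A) (hB : IsLocallyNull μ B) :
    IsLocallyNull μ (A ∪ B) := fun K hK => by
  rw [inter_union_distrib_left]
  exact measure_union_null (hA K hK) (hB K hK)

theorem IsLocallyNull.exists_notMem [μ.IsOpenPosMeasure] [WeaklyLocallyCompactSpace X]
    [Nonempty X] (hA : IsLocallyNull μ A) : ∃ x, x ∉ A := by
  obtain ⟨K, hK, hK_nhds⟩ := exists_compact_mem_nhds (Classical.arbitrary X)
  by_contra! hxA
  have := hA K hK
  rw [inter_eq_left.2 fun x _ => hxA x] at this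
  exact (μ.measure_pos_of_mem_nhds hK_nhds).ne' this

theorem IsLocallyNull.smul {G : Type*} [Group G] [MulAction G X] [ContinuousConstSMul G X]
    [SMulInvariantMeasure G X μ] (hA : IsLocallyNull μ A) (g : G) :
    IsLocallyNull μ (g • A) := fun K hK => by
  rw [← smul_inv_smul g K, ← smul_set_inter, measure_smul]
  exact hA _ (hK.smul g⁻¹)

end IsLocallyNull

theorem IsOpen.measure_le_of_integral_le {X : Type*} [TopologicalSpace X] [RegularSpace X]
    [LocallyCompactSpace X] [MeasurableSpace X] [BorelSpace X] {ν μ : Measure X} [ν.Regular]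
    {U : Set X} (hU : IsOpen U)
    (h : ∀ f : X → ℝ, Continuous f → HasCompactSupport f → 0 ≤ f → f ≤ 1 → EqOn f 0 Uᶜ →
      ∫ x, f x ∂ν ≤ ∫ x, f x ∂μ) :
    ν U ≤ μ U := by
  rw [hU.measure_eq_iSup_isCompact]
  refine iSup₂_le fun K hKU => iSup_le fun hK => ?_
  obtain ⟨f, hfK, hfU, hf_comp, hf_range⟩ := exists_continuous_one_zero_of_isCompact hK
    hU.isClosed_compl (disjoint_compl_right_iff_subset.2 hKU)
  calc ν K ≤ ENNReal.ofReal (∫ x, f x ∂ν) :=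
        (f.continuous.integrable_of_hasCompactSupport hf_comp).measure_le_integral
          (Eventually.of_forall fun x => (hf_range x).1) fun x hx => (hfK hx).ge
    _ ≤ ENNReal.ofReal (∫ x, f x ∂μ) := ENNReal.ofReal_le_ofReal <|
        h f f.continuous hf_comp (fun x => (hf_range x).1) (fun x => (hf_range x).2) hfU
    _ ≤ μ U := integral_le_measure (fun x _ => (hf_range x).2) fun x hx => (hfU hx).le

section HaarInv

variable {G : Type*} [Group G] [TopologicalSpace G] [IsTopologicalGroup G]
  [LocallyCompactSpace G] [MeasurableSpace G] [BorelSpace G]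

theorem exists_continuous_integral_inv_eq_integral_mul (μ : Measure G) [μ.IsHaarMeasure] :
    ∃ D : G → ℝ, Continuous D ∧ ∀ f : G → ℝ, Continuous f → HasCompactSupport f →
      ∫ x, f x ∂μ.inv = ∫ x, f x * D x ∂μ := by
  obtain ⟨g, hg_comp, hg_nonneg, hg_one⟩ := exists_continuous_nonneg_pos (1 : G)
  set c := ∫ x, g x ∂μ
  have hc : 0 < c :=
    g.continuous.integral_pos_of_hasCompactSupport_nonneg_nonzero hg_comp hg_nonneg hg_one
  set E : G → ℝ := fun x => ∫ y, g (y⁻¹ * x) ∂μ.inv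
  have hE_pos (x : G) : 0 < E x := by
    have hcont : Continuous fun y => g (y⁻¹ * x) := by fun_prop
    refine (integral_pos_iff_support_of_nonneg (fun y => hg_nonneg (y⁻¹ * x)) ?_).2 ?_
    · exact hcont.integrable_of_hasCompactSupport
        (hg_comp.comp_homeomorph ((Homeomorph.inv G).trans (Homeomorph.mulRight x)))
    · exact hcont.isOpen_support.measure_pos μ.inv ⟨x, by simpa using hg_one⟩
  have hE_cont : Continuous E := continuous_integral_apply_inv_mul g.continuous hg_comp
  refine ⟨fun x => E x / c, hE_cont.div_const c, fun f hf hf_comp => ?_⟩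
  -- The combination formula applied to `f * E` cancels the factor `E⁻¹` it introduces.
  have hcombo := integral_isMulLeftInvariant_isMulRightInvariant_combo (μ := μ) (ν := μ.inv)
    (hf.mul hE_cont) hf_comp.mul_right g.continuous hg_comp hg_nonneg hg_one
  have hfE : ∫ x, f x * E x ∂μ = (∫ x, f x ∂μ.inv) * c := by
    rw [← Pi.mul_def, hcombo]
    congr 1
    exact integral_congr_ae (Eventually.of_forall fun y => mul_inv_cancel_right₀ (hE_pos y).ne' _)
  simp only [mul_div_assoc', integral_div, hfE, mul_div_cancel_right₀ _ hc.ne']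

theorem measure_inv_eq_zero_of_subset_isCompact (μ : Measure G) [μ.IsHaarMeasure] [μ.Regular]
    {K B : Set G} (hK : IsCompact K) (hBK : B ⊆ K) (hB : μ B = 0) : μ B⁻¹ = 0 := by
  obtain ⟨D, hD, hinv⟩ := exists_continuous_integral_inv_eq_integral_mul μ
  obtain ⟨L, hL, hKL⟩ := exists_compact_superset hK
  obtain ⟨M, hM⟩ : ∃ M : ℝ≥0, ∀ x ∈ L, D x ≤ M := by
    obtain ⟨C, hC⟩ := hL.exists_bound_of_continuousOn hD.continuousOn
    exact ⟨C.toNNReal, fun x hx => (le_abs_self _).trans ((hC x hx).trans C.le_coe_toNNReal)⟩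
  have hdom (U : Set G) (hU : IsOpen U) (hUL : U ⊆ interior L) : μ.inv U ≤ (M • μ) U := by
    refine hU.measure_le_of_integral_le fun f hf hf_comp hf0 _ hfU => ?_
    rw [hinv f hf hf_comp, integral_smul_nnreal_measure, NNReal.smul_def, smul_eq_mul,
      ← integral_const_mul]
    refine integral_mono ((hf.mul hD).integrable_of_hasCompactSupport hf_comp.mul_right)
      ((continuous_const.mul hf).integrable_of_hasCompactSupport hf_comp.mul_left) fun x => ?_
    by_cases hx : x ∈ U
    · rw [mul_comm (M : ℝ)]
      exact mul_le_mul_of_nonneg_left (hM x (interior_subset (hUL hx))) (hf0 x)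
    · simp [hfU hx]
  have hMB : (M • μ) B = 0 := by simp [hB]
  rw [← inv_apply, ← nonpos_iff_eq_zero, ← hMB, Set.measure_eq_iInf_isOpen B (M • μ)]
  refine le_iInf₂ fun U hBU => le_iInf fun hU => ?_
  calc μ.inv B ≤ μ.inv (U ∩ interior L) := measure_mono (subset_inter hBU (hBK.trans hKL))
    _ ≤ (M • μ) (U ∩ interior L) := hdom _ (hU.inter isOpen_interior) inter_subset_right
    _ ≤ (M • μ) U := measure_mono inter_subset_left

end HaarInv

section LocallyNullGroup

variable {G : Type*} [Group G] [TopologicalSpace G] [IsTopologicalGroup G]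
  [LocallyCompactSpace G] [MeasurableSpace G] [BorelSpace G] {A : Set G}

theorem IsLocallyNull.of_isHaarMeasure {μ : Measure G} [μ.IsHaarMeasure] (hA : IsLocallyNull μ A)
    (ν : Measure G) [IsFiniteMeasureOnCompacts ν] [ν.IsMulLeftInvariant] :
    IsLocallyNull ν A := fun K hK => by
  rw [measure_isMulInvariant_eq_smul_of_isCompact_closure ν μ
    (hK.closure.of_isClosed_subset isClosed_closure (closure_mono inter_subset_left)),
    hA K hK, smul_zero]

theorem IsLocallyNull.inv {μ : Measure G} [μ.IsHaarMeasure] (hA : IsLocallyNull μ A) :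
    IsLocallyNull μ A⁻¹ := by
  have hA' := hA.of_isHaarMeasure haar
  refine IsLocallyNull.of_isHaarMeasure (μ := haar) (fun K hK => ?_) μ
  simpa only [inter_inv, inv_inv] using
    measure_inv_eq_zero_of_subset_isCompact haar hK.inv inter_subset_left (hA' K⁻¹ hK.inv)

theorem mul_self_eq_univ_of_isLocallyNull_compl {μ : Measure G} [μ.IsHaarMeasure] {S : Set G}
    (hS : IsLocallyNull μ Sᶜ) : S * S = univ := by
  refine eq_univ_of_forall fun g => ?_
  obtain ⟨x, hx⟩ := (hS.union (hS.inv.smul g)).exists_notMem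
  rw [mem_union, not_or, notMem_compl_iff] at hx
  have : x⁻¹ * g ∈ S := by simpa [mem_smul_set_iff_inv_smul_mem] using hx.2
  exact ⟨x, hx.1, x⁻¹ * g, this, mul_inv_cancel_left x g⟩

end LocallyNullGroup

section Moderation

variable {G : Type*} [Group G] [MeasurableSpace G] [MeasurableMul G]

noncomputable def moderationFunction (μ : Measure G) (w : G → ℝ) (s : G) : ℝ≥0∞ :=
  essSup (fun t => ENNReal.ofReal (w (s * t) / w t)) μ

theorem moderationFunction_mul_le (μ : Measure G) [μ.IsMulLeftInvariant] {w : G → ℝ}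
    (hw : ∀ x, 0 < w x) (s t : G) :
    moderationFunction μ w (s * t) ≤ moderationFunction μ w s * moderationFunction μ w t := by
  set ratio : G → G → ℝ≥0∞ := fun a x => ENNReal.ofReal (w (a * x) / w x)
  have hsplit : ratio (s * t) = (ratio s ∘ (t * ·)) * ratio t := by
    funext x
    simp only [ratio, Pi.mul_apply, Function.comp_apply,
      ← ENNReal.ofReal_mul (div_nonneg (hw _).le (hw _).le), mul_assoc,
      div_mul_div_cancel₀ (hw (t * x)).ne']
  have hshift : essSup (ratio s ∘ (t * ·)) μ = essSup (ratio s) μ := by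
    have h := (MeasurableEquiv.mulLeft t).measurableEmbedding.essSup_map_measure
      (μ := μ) (g := ratio s)
    rw [MeasurableEquiv.coe_mulLeft, map_mul_left_eq_self] at h
    exact h.symm
  calc essSup (ratio (s * t)) μ = essSup ((ratio s ∘ (t * ·)) * ratio t) μ := by rw [hsplit]
    _ ≤ essSup (ratio s ∘ (t * ·)) μ * essSup (ratio t) μ := ENNReal.essSup_mul_le _ _
    _ = essSup (ratio s) μ * essSup (ratio t) μ := by rw [hshift]

end Moderation

theorem moderate_locally_ae_implies_everywhere_general {G : Type*} [Group G] [TopologicalSpace G]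
    [IsTopologicalGroup G] [LocallyCompactSpace G] [MeasurableSpace G] [BorelSpace G]
    (μ : Measure G) [μ.IsHaarMeasure] (w : G → ℝ)
    (hwpos : ∀ x, 0 < w x)
    (S : Set G)
    (hS : S = {s : G | essSup (fun t => ENNReal.ofReal (w (s * t) / w t)) μ < ⊤})
    (hfull : ∀ K : Set G, IsCompact K → μ (K ∩ Sᶜ) = 0) :
    S = Set.univ := by
  have hmul : S * S ⊆ S := by
    rintro _ ⟨s, hs, t, ht, rfl⟩
    rw [hS] at hs ht ⊢
    exact (moderationFunction_mul_le μ hwpos s t).trans_lt (ENNReal.mul_lt_top hs ht)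
  exact eq_univ_of_univ_subset (mul_self_eq_univ_of_isLocallyNull_compl hfull ▸ hmul)

theorem moderate_locally_ae_implies_everywhere {G : Type*} [Group G] [TopologicalSpace G]
    [IsTopologicalGroup G] [LocallyCompactSpace G] [MeasurableSpace G] [BorelSpace G]
    (μ : Measure G) [μ.IsHaarMeasure] (w : G → ℝ) (hw : Measurable w)
    (hwpos : ∀ x, 0 < w x)
    (S : Set G)
    (hS : S = {s : G | essSup (fun t => ENNReal.ofReal (w (s * t) / w t)) μ < ⊤})
    (hfull : ∀ K : Set G, IsCompact K → μ (K ∩ Sᶜ) = 0) :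
    S = Set.univ :=
  moderate_locally_ae_implies_everywhere_general μ w hwpos S hS hfull
end

section
/- Let G be a locally compact group with left Haar measure, A, B ⊆ G measurable sets with A of finite positive measure, and s, t ∈ G. Then pointwise μ(A) · 1_{stB} ≤ 1_{sA} * 1_{A⁻¹tB}, where * is convolution with respect to left Haar measure. -/
open MeasureTheory ENNReal Pointwise

theorem Set.inv_mul_mem_inv_mul_smul {G : Type*} [Group G] {A B : Set G} {s t r x : G}
    (hr : r ∈ s • A) (hx : x ∈ (s * t) • B) : r⁻¹ * x ∈ A⁻¹ * t • B := by
  obtain ⟨a, ha, rfl⟩ := hr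
  obtain ⟨b, hb, rfl⟩ := hx
  have hcancel : (s • a)⁻¹ * ((s * t) • b) = a⁻¹ * t • b := by
    simp only [smul_eq_mul]; group
  exact hcancel ▸ Set.mul_mem_mul (Set.inv_mem_inv.mpr ha) (Set.smul_mem_smul_set hb)

theorem Set.indicator_one_mul_indicator_one_comp_of_mapsTo {α β M : Type*} [MulZeroOneClass M]
    {S : Set α} {T : Set β} {f : α → β} (h : Set.MapsTo f S T) (r : α) :
    S.indicator 1 r * T.indicator (1 : β → M) (f r) = S.indicator 1 r := by
  by_cases hr : r ∈ S
  · rw [Set.indicator_of_mem (h hr), Pi.one_apply, mul_one]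
  · rw [Set.indicator_of_notMem hr, zero_mul]

theorem MeasureTheory.integral_indicator_one_smul {G : Type*} [Group G] [MeasurableSpace G]
    [MeasurableMul G] (μ : Measure G) [μ.IsMulLeftInvariant] {A : Set G} (hA : MeasurableSet A)
    (s : G) : ∫ r, (s • A).indicator 1 r ∂μ = μ.real A := by
  rw [integral_indicator_one (hA.const_smul s), measureReal_def, measureReal_def, measure_smul]

theorem indicator_convolution_lower_bound_general {G : Type*} [Group G] [TopologicalSpace G]
    [IsTopologicalGroup G] [MeasurableSpace G] [BorelSpace G]
    (μ : Measure G) [μ.IsHaarMeasure] (A B : Set G)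
    (hA : MeasurableSet A) (s t : G) :
    ∀ x : G, (μ A).toReal * Set.indicator ((s * t) • B) (fun _ => (1 : ℝ)) x ≤
      ∫ r, Set.indicator (s • A) (fun _ => (1 : ℝ)) r *
        Set.indicator (A⁻¹ * t • B) (fun _ => (1 : ℝ)) (r⁻¹ * x) ∂μ := by
  intro x
  by_cases hx : x ∈ (s * t) • B
  · have hmaps : Set.MapsTo (fun r => r⁻¹ * x) (s • A) (A⁻¹ * t • B) :=
      fun _ hr => Set.inv_mul_mem_inv_mul_smul hr hx
    rw [Set.indicator_of_mem hx, mul_one]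
    exact (integral_indicator_one_smul μ hA s).ge.trans_eq <| integral_congr_ae <|
      .of_forall fun r => (Set.indicator_one_mul_indicator_one_comp_of_mapsTo hmaps r).symm
  · rw [Set.indicator_of_notMem hx, mul_zero]
    exact integral_nonneg fun r => mul_nonneg (Set.indicator_nonneg (fun _ _ => zero_le_one) _)
      (Set.indicator_nonneg (fun _ _ => zero_le_one) _)

theorem indicator_convolution_lower_bound {G : Type*} [Group G] [TopologicalSpace G]
    [IsTopologicalGroup G] [LocallyCompactSpace G] [MeasurableSpace G] [BorelSpace G]
    (μ : Measure G) [μ.IsHaarMeasure] (A B : Set G)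
    (hA : MeasurableSet A) (hB : MeasurableSet B)
    (hA0 : 0 < μ A) (hAfin : μ A < ⊤) (s t : G) :
    ∀ x : G, (μ A).toReal * Set.indicator ((s * t) • B) (fun _ => (1 : ℝ)) x ≤
      ∫ r, Set.indicator (s • A) (fun _ => (1 : ℝ)) r *
        Set.indicator (A⁻¹ * t • B) (fun _ => (1 : ℝ)) (r⁻¹ * x) ∂μ :=
  indicator_convolution_lower_bound_general μ A B hA s t
end

section
/- Define w : ℝ → (0,∞) by w(t) = max(|n|,1) for t ∈ [n, n + 1/max(|n|,1)²) and w(t) = max(|n|,1)² for t ∈ [n + 1/max(|n|,1)², n+1), for each integer n. Then there is a constant C such that w^{-2} * w^{-2} ≤ C·w^{-2} pointwise almost everywhere on ℝ, so L_2^w(ℝ) (after rescaling w by a constant) is a convolution algebra. -/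
/-!
On `[n, n + 1)` the weight `w` equals `n̄` on a piece of length `n̄⁻²` and `n̄²` on the rest, so
there `n̄⁻⁴ ≤ w⁻² ≤ n̄⁻²` and `∫_{[n, n+1)} w⁻² ≤ 2 n̄⁻⁴`. For `x ∈ [m, m + 1)`, bounding either
factor of `w⁻²(t) w⁻²(x - t)` by its supremum over `t ∈ [n, n + 1)` and integrating the other gives
`∫_{[n, n+1)} ≲ min (n̄⁻⁴ (m-n)̄⁻², n̄⁻² (m-n)̄⁻⁴)`; since `max (n̄, (m-n)̄) ≥ m̄ / 2` this is
`≲ m̄⁻⁴ (n̄⁻² + (m-n)̄⁻²)`, which sums over `n` to `≲ m̄⁻⁴ ≤ w⁻²(x)`.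

The algebra property then follows from Cauchy–Schwarz:
`|f ∗ g|² w² ≤ (|f w|² ∗ |g w|²) · (w⁻² ∗ w⁻²) w² ≤ C (|f w|² ∗ |g w|²)`,
whose integral is `C ‖f w‖₂² ‖g w‖₂²`.
-/

open MeasureTheory ENNReal

noncomputable def paperWeight (t : ℝ) : ℝ :=
  let n : ℤ := ⌊t⌋
  let nb : ℝ := max |(n : ℝ)| 1
  if t - (n : ℝ) < 1 / nb ^ 2 then nb else nb ^ 2

open Set

theorem ENNReal.lintegral_mul_sq_le {α : Type*} [MeasurableSpace α] (μ : Measure α)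
    {u v : α → ℝ≥0∞} (hu : AEMeasurable u μ) (hv : AEMeasurable v μ) :
    (∫⁻ a, u a * v a ∂μ) ^ 2 ≤ (∫⁻ a, u a ^ 2 ∂μ) * ∫⁻ a, v a ^ 2 ∂μ := by
  have hCS := ENNReal.lintegral_mul_le_Lp_mul_Lq μ Real.HolderConjugate.two_two hu hv
  simp only [Pi.mul_apply, ENNReal.rpow_two] at hCS
  calc (∫⁻ a, u a * v a ∂μ) ^ 2
      ≤ ((∫⁻ a, u a ^ 2 ∂μ) ^ (1 / 2 : ℝ) * (∫⁻ a, v a ^ 2 ∂μ) ^ (1 / 2 : ℝ)) ^ 2 := by gcongr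
    _ = (∫⁻ a, u a ^ 2 ∂μ) * ∫⁻ a, v a ^ 2 ∂μ := by
      rw [mul_pow, ← ENNReal.rpow_two, ← ENNReal.rpow_two, ← ENNReal.rpow_mul, ← ENNReal.rpow_mul]
      norm_num

theorem enorm_eq_enorm_mul_mul_enorm_inv {𝕜 : Type*} [NormedDivisionRing 𝕜] {a w : 𝕜}
    (hw : w ≠ 0) :
    ‖a‖ₑ = ‖a * w‖ₑ * ‖w‖ₑ⁻¹ := by
  rw [enorm_mul, mul_assoc, ENNReal.mul_inv_cancel (enorm_ne_zero.2 hw) enorm_ne_top, mul_one]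

section WeightedConvolution

variable {G : Type*} [MeasurableSpace G] [AddGroup G] [MeasurableAdd₂ G] [MeasurableNeg G]
  {μ : Measure G} [SFinite μ] [μ.IsAddRightInvariant]

theorem AEMeasurable.comp_sub_left {F : G → ℝ≥0∞} (hF : AEMeasurable F μ) (x : G) :
    AEMeasurable (fun t => F (x - t)) μ :=
  hF.comp_quasiMeasurePreserving (quasiMeasurePreserving_sub_left_of_right_invariant μ x)

theorem lintegral_lintegral_mul_sub {F H : G → ℝ≥0∞} (hF : AEMeasurable F μ)
    (hH : AEMeasurable H μ) :
    ∫⁻ x, ∫⁻ t, F t * H (x - t) ∂μ ∂μ = (∫⁻ t, F t ∂μ) * ∫⁻ t, H t ∂μ := by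
  have hprod : AEMeasurable (fun p : G × G => F p.2 * H (p.1 - p.2)) (μ.prod μ) :=
    hF.comp_snd.mul
      (hH.comp_quasiMeasurePreserving (quasiMeasurePreserving_sub_of_right_invariant μ μ))
  rw [lintegral_lintegral_swap hprod, ← lintegral_mul_const'' _ hF]
  congr 1 with t
  have hH_shift : AEMeasurable (fun x => H (x - t)) μ :=
    hH.comp_quasiMeasurePreserving (measurePreserving_sub_right μ t).quasiMeasurePreserving
  rw [lintegral_const_mul'' _ hH_shift, lintegral_sub_right_eq_self H t]

theorem enorm_convolution_mul_weight_sq_le {w f g : G → ℝ} (hw : AEMeasurable w μ)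
    (hw0 : ∀ x, w x ≠ 0) (hf : AEMeasurable (fun x => f x * w x) μ)
    (hg : AEMeasurable (fun x => g x * w x) μ) (x : G) :
    ‖(∫ t, f t * g (x - t) ∂μ) * w x‖ₑ ^ 2 ≤
      (∫⁻ t, ‖f t * w t‖ₑ ^ 2 * ‖g (x - t) * w (x - t)‖ₑ ^ 2 ∂μ) *
        ((∫⁻ t, ‖w t‖ₑ⁻¹ ^ 2 * ‖w (x - t)‖ₑ⁻¹ ^ 2 ∂μ) * ‖w x‖ₑ ^ 2) := by
  have hwinv : AEMeasurable (fun t => ‖w t‖ₑ⁻¹) μ := hw.enorm.inv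
  have hsplit : ∀ t, ‖f t * g (x - t)‖ₑ =
      (‖f t * w t‖ₑ * ‖g (x - t) * w (x - t)‖ₑ) * (‖w t‖ₑ⁻¹ * ‖w (x - t)‖ₑ⁻¹) := fun t => by
    rw [enorm_mul, enorm_eq_enorm_mul_mul_enorm_inv (hw0 t),
      enorm_eq_enorm_mul_mul_enorm_inv (a := g (x - t)) (hw0 (x - t))]
    ring
  have hCS := ENNReal.lintegral_mul_sq_le μ (hf.enorm.mul (hg.enorm.comp_sub_left x))
    (hwinv.mul (hwinv.comp_sub_left x))
  simp only [Pi.mul_apply, mul_pow] at hCS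
  calc ‖(∫ t, f t * g (x - t) ∂μ) * w x‖ₑ ^ 2
      ≤ (∫⁻ t, ‖f t * g (x - t)‖ₑ ∂μ) ^ 2 * ‖w x‖ₑ ^ 2 := by
        rw [enorm_mul, mul_pow]
        gcongr
        exact enorm_integral_le_lintegral_enorm _
    _ ≤ _ := by
        simp only [hsplit]
        rw [← mul_assoc]
        gcongr

theorem memLp_convolution_mul_weight {w f g : G → ℝ} (hw : AEStronglyMeasurable w μ)
    (hw0 : ∀ x, w x ≠ 0) {C : ℝ≥0∞} (hC : C ≠ ∞)
    (hconv : ∀ᵐ x ∂μ, ∫⁻ t, ‖w t‖ₑ⁻¹ ^ 2 * ‖w (x - t)‖ₑ⁻¹ ^ 2 ∂μ ≤ C * ‖w x‖ₑ⁻¹ ^ 2)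
    (hf : MemLp (fun x => f x * w x) 2 μ) (hg : MemLp (fun x => g x * w x) 2 μ) :
    MemLp (fun x => (∫ t, f t * g (x - t) ∂μ) * w x) 2 μ := by
  have hunweight {u : G → ℝ} (hu : MemLp (fun x => u x * w x) 2 μ) :
      AEStronglyMeasurable u μ := by
    convert hu.1.mul hw.inv₀ using 1
    funext x
    simp [mul_assoc, mul_inv_cancel₀ (hw0 x)]
  have hf_meas := hunweight hf
  have hg_meas := hunweight hg
  have hconv_meas : AEStronglyMeasurable (fun x => ∫ t, f t * g (x - t) ∂μ) μ :=
    (hf_meas.convolution_integrand (ContinuousLinearMap.mul ℝ ℝ) hg_meas).integral_prod_right'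
  refine ⟨hconv_meas.mul hw, ?_⟩
  have hF := (eLpNorm_lt_top_iff_lintegral_rpow_enorm_lt_top two_ne_zero ofNat_ne_top).1 hf.2
  have hG := (eLpNorm_lt_top_iff_lintegral_rpow_enorm_lt_top two_ne_zero ofNat_ne_top).1 hg.2
  rw [eLpNorm_lt_top_iff_lintegral_rpow_enorm_lt_top two_ne_zero ofNat_ne_top]
  simp only [toReal_ofNat, rpow_two] at hF hG ⊢
  have hpointwise : ∀ᵐ x ∂μ, ‖(∫ t, f t * g (x - t) ∂μ) * w x‖ₑ ^ 2 ≤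
      (∫⁻ t, ‖f t * w t‖ₑ ^ 2 * ‖g (x - t) * w (x - t)‖ₑ ^ 2 ∂μ) * C := by
    filter_upwards [hconv] with x hx
    refine (enorm_convolution_mul_weight_sq_le hw.aemeasurable hw0 hf.1.aemeasurable
      hg.1.aemeasurable x).trans ?_
    gcongr
    calc (∫⁻ t, ‖w t‖ₑ⁻¹ ^ 2 * ‖w (x - t)‖ₑ⁻¹ ^ 2 ∂μ) * ‖w x‖ₑ ^ 2
        ≤ C * ‖w x‖ₑ⁻¹ ^ 2 * ‖w x‖ₑ ^ 2 := by gcongr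
      _ = C := by
        rw [mul_assoc, ← mul_pow, ENNReal.inv_mul_cancel (enorm_ne_zero.2 (hw0 x)) enorm_ne_top,
          one_pow, mul_one]
  calc ∫⁻ x, ‖(∫ t, f t * g (x - t) ∂μ) * w x‖ₑ ^ 2 ∂μ
      ≤ ∫⁻ x, (∫⁻ t, ‖f t * w t‖ₑ ^ 2 * ‖g (x - t) * w (x - t)‖ₑ ^ 2 ∂μ) * C ∂μ :=
        lintegral_mono_ae hpointwise
    _ = (∫⁻ t, ‖f t * w t‖ₑ ^ 2 ∂μ) * (∫⁻ t, ‖g t * w t‖ₑ ^ 2 ∂μ) * C := by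
        rw [lintegral_mul_const' _ _ hC, lintegral_lintegral_mul_sub (μ := μ)
          (hf.1.aemeasurable.enorm.pow_const 2) (hg.1.aemeasurable.enorm.pow_const 2)]
    _ < ∞ := mul_lt_top (mul_lt_top hF hG) hC.lt_top

end WeightedConvolution

noncomputable def nbar (n : ℤ) : ℝ := max |(n : ℝ)| 1

theorem one_le_nbar (n : ℤ) : 1 ≤ nbar n := le_max_right _ _

theorem nbar_pos (n : ℤ) : 0 < nbar n := one_pos.trans_le (one_le_nbar n)

theorem nbar_add_le (m n : ℤ) : nbar (m + n) ≤ nbar m + nbar n := by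
  have := abs_add_le (m : ℝ) n
  unfold nbar
  push_cast
  exact max_le (by linarith [le_max_left |(m : ℝ)| 1, le_max_left |(n : ℝ)| 1])
    (by linarith [le_max_right |(m : ℝ)| 1, le_max_right |(n : ℝ)| 1])

theorem nbar_le_two_mul_nbar_sub_one (k : ℤ) : nbar k ≤ 2 * nbar (k - 1) := by
  have h := nbar_add_le (k - 1) 1
  have h1 : nbar 1 = 1 := by norm_num [nbar]
  rw [sub_add_cancel, h1] at h
  linarith [one_le_nbar (k - 1)]

noncomputable def nbarInv (n : ℤ) : ℝ≥0∞ := (ENNReal.ofReal (nbar n))⁻¹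

theorem nbarInv_zero : nbarInv 0 = 1 := by norm_num [nbarInv, nbar]

theorem nbarInv_le_one (n : ℤ) : nbarInv n ≤ 1 :=
  ENNReal.inv_le_one.2 (ENNReal.one_le_ofReal.2 (one_le_nbar n))

theorem nbarInv_le_two_mul {a b : ℤ} (h : nbar a ≤ 2 * nbar b) : nbarInv b ≤ 2 * nbarInv a := by
  have ha := nbar_pos a
  have hb := nbar_pos b
  rw [nbarInv, nbarInv, ← ofReal_inv_of_pos ha, ← ofReal_inv_of_pos hb, ← ofReal_ofNat 2,
    ← ofReal_mul zero_le_two]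
  gcongr
  rw [← div_eq_mul_inv, le_div_iff₀ ha, ← div_eq_inv_mul, div_le_iff₀ hb]
  linarith

theorem nbarInv_sub_one_le (k : ℤ) : nbarInv (k - 1) ≤ 2 * nbarInv k :=
  nbarInv_le_two_mul (nbar_le_two_mul_nbar_sub_one k)

theorem summable_inv_nbar_sq : Summable fun n : ℤ => (nbar n ^ 2)⁻¹ := by
  refine Summable.of_norm_bounded_eventually (Real.summable_one_div_int_pow.2 one_lt_two) ?_
  filter_upwards [(Set.finite_singleton (0 : ℤ)).compl_mem_cofinite] with n hn
  have hn : (n : ℝ) ≠ 0 := by exact_mod_cast hn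
  rw [Real.norm_of_nonneg (by positivity), one_div, ← sq_abs (n : ℝ)]
  gcongr
  exact le_max_left |(n : ℝ)| 1

theorem tsum_nbarInv_sq_ne_top : ∑' n : ℤ, nbarInv n ^ 2 ≠ ∞ := by
  have h (n : ℤ) : nbarInv n ^ 2 = ENNReal.ofReal ((nbar n ^ 2)⁻¹) := by
    rw [nbarInv, ofReal_inv_of_pos (by positivity [nbar_pos n]), ofReal_pow (nbar_pos n).le,
      ENNReal.inv_pow]
  simp only [h, ← ofReal_tsum_of_nonneg (fun n => by positivity) summable_inv_nbar_sq]
  exact ofReal_ne_top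

theorem paperWeight_of_floor_eq {t : ℝ} {n : ℤ} (h : ⌊t⌋ = n) :
    paperWeight t = if t - n < 1 / nbar n ^ 2 then nbar n else nbar n ^ 2 := by
  simp only [paperWeight, h, nbar]
  rfl

theorem paperWeight_pos (t : ℝ) : 0 < paperWeight t := by
  have := nbar_pos ⌊t⌋
  rw [paperWeight_of_floor_eq rfl]
  split_ifs <;> positivity

theorem measurable_paperWeight : Measurable paperWeight := by
  have hfloor : Measurable fun t : ℝ => ((⌊t⌋ : ℤ) : ℝ) :=
    measurable_from_top.comp Int.measurable_floor
  have hnbar : Measurable fun t : ℝ => max |((⌊t⌋ : ℤ) : ℝ)| 1 := hfloor.abs.max measurable_const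
  exact Measurable.ite (measurableSet_lt (measurable_id.sub hfloor)
    ((hnbar.pow_const 2).const_div 1)) hnbar (hnbar.pow_const 2)

noncomputable def paperWeightInvSq (t : ℝ) : ℝ≥0∞ := ‖paperWeight t‖ₑ⁻¹ ^ 2

theorem measurable_paperWeightInvSq : Measurable paperWeightInvSq :=
  (measurable_paperWeight.enorm.inv).pow_const 2

theorem paperWeightInvSq_of_floor_eq {t : ℝ} {n : ℤ} (h : ⌊t⌋ = n) :
    paperWeightInvSq t = if t - n < 1 / nbar n ^ 2 then nbarInv n ^ 2 else nbarInv n ^ 4 := by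
  rw [paperWeightInvSq, paperWeight_of_floor_eq h, nbarInv]
  split_ifs
  · rw [Real.enorm_of_nonneg (nbar_pos n).le]
  · rw [Real.enorm_of_nonneg (by positivity), ofReal_pow (nbar_pos n).le, ENNReal.inv_pow,
      ← pow_mul]

theorem paperWeightInvSq_le {t : ℝ} {n : ℤ} (h : ⌊t⌋ = n) : paperWeightInvSq t ≤ nbarInv n ^ 2 := by
  rw [paperWeightInvSq_of_floor_eq h]
  split_ifs
  · exact le_rfl
  · exact pow_le_pow_right_of_le_one' (nbarInv_le_one n) (by norm_num)

theorem nbarInv_pow_four_le_paperWeightInvSq {t : ℝ} {n : ℤ} (h : ⌊t⌋ = n) :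
    nbarInv n ^ 4 ≤ paperWeightInvSq t := by
  rw [paperWeightInvSq_of_floor_eq h]
  split_ifs
  · exact pow_le_pow_right_of_le_one' (nbarInv_le_one n) (by norm_num)
  · exact le_rfl

theorem setLIntegral_Ico_paperWeightInvSq_le (n : ℤ) :
    ∫⁻ t in Ico (n : ℝ) (n + 1), paperWeightInvSq t ≤ 2 * nbarInv n ^ 4 := by
  set c : ℝ := n + 1 / nbar n ^ 2
  have hnc : (n : ℝ) ≤ c := by simp only [c]; linarith [show 0 ≤ 1 / nbar n ^ 2 by positivity]
  have hcn : c ≤ n + 1 := by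
    suffices 1 / nbar n ^ 2 ≤ 1 by simp only [c]; linarith
    rw [div_le_one (by positivity [nbar_pos n])]
    nlinarith [one_le_nbar n]
  have hfloor {t : ℝ} (h1 : (n : ℝ) ≤ t) (h2 : t < n + 1) : ⌊t⌋ = n := Int.floor_eq_iff.2 ⟨h1, h2⟩
  have hvol : volume (Ico (n : ℝ) c) = nbarInv n ^ 2 := by
    rw [Real.volume_Ico, add_sub_cancel_left, nbarInv, one_div,
      ofReal_inv_of_pos (by positivity [nbar_pos n]), ofReal_pow (nbar_pos n).le, ENNReal.inv_pow]
  rw [← Ico_union_Ico_eq_Ico (a := (n : ℝ)) (b := c) hnc hcn]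
  calc ∫⁻ t in Ico (n : ℝ) c ∪ Ico c (n + 1), paperWeightInvSq t
      ≤ (∫⁻ t in Ico (n : ℝ) c, nbarInv n ^ 2) + ∫⁻ t in Ico c (n + 1), nbarInv n ^ 4 := by
        refine (lintegral_union_le _ _ _).trans (add_le_add ?_ ?_)
        · refine setLIntegral_mono' measurableSet_Ico fun t ht => paperWeightInvSq_le ?_
          exact hfloor ht.1 (ht.2.trans_le hcn)
        · refine (setLIntegral_congr_fun measurableSet_Ico fun t ht => ?_).le
          rw [paperWeightInvSq_of_floor_eq (hfloor (hnc.trans ht.1) ht.2), if_neg]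
          simp only [c] at ht
          linarith [ht.1]
    _ ≤ nbarInv n ^ 2 * nbarInv n ^ 2 + nbarInv n ^ 4 * 1 := by
        rw [setLIntegral_const, setLIntegral_const, hvol]
        gcongr
        rw [Real.volume_Ico]
        exact ofReal_le_one.2 (by linarith)
    _ = 2 * nbarInv n ^ 4 := by ring

theorem paperWeightInvSq_sub_le {x t : ℝ} {m n : ℤ} (hx : ⌊x⌋ = m) (ht : t ∈ Ico (n : ℝ) (n + 1)) :
    paperWeightInvSq (x - t) ≤ 4 * nbarInv (m - n) ^ 2 := by
  have hx₁ : (m : ℝ) ≤ x := hx ▸ Int.floor_le x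
  have hx₂ : x < m + 1 := hx ▸ Int.lt_floor_add_one x
  have hfloor : ⌊x - t⌋ = m - n ∨ ⌊x - t⌋ = m - n - 1 := by
    have hlo : m - n - 1 ≤ ⌊x - t⌋ := Int.le_floor.2 (by push_cast; linarith [ht.2])
    have hhi : ⌊x - t⌋ ≤ m - n := Int.floor_le_iff.2 (by push_cast; linarith [ht.1])
    omega
  have hnear : nbarInv ⌊x - t⌋ ≤ 2 * nbarInv (m - n) := by
    rcases hfloor with h | h <;> rw [h]
    · exact le_mul_of_one_le_left' one_le_two
    · exact nbarInv_sub_one_le (m - n)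
  calc paperWeightInvSq (x - t) ≤ nbarInv ⌊x - t⌋ ^ 2 := paperWeightInvSq_le rfl
    _ ≤ (2 * nbarInv (m - n)) ^ 2 := by gcongr
    _ = 4 * nbarInv (m - n) ^ 2 := by ring

theorem setLIntegral_Ico_sub_one_add_one_paperWeightInvSq_le (k : ℤ) :
    ∫⁻ s in Ico ((k : ℝ) - 1) (k + 1), paperWeightInvSq s ≤ 34 * nbarInv k ^ 4 := by
  have hprev := setLIntegral_Ico_paperWeightInvSq_le (k - 1)
  push_cast at hprev
  rw [sub_add_cancel] at hprev
  rw [← Ico_union_Ico_eq_Ico (b := (k : ℝ)) (by linarith) (by linarith)]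
  calc ∫⁻ s in Ico ((k : ℝ) - 1) k ∪ Ico (k : ℝ) (k + 1), paperWeightInvSq s
      ≤ 2 * nbarInv (k - 1) ^ 4 + 2 * nbarInv k ^ 4 :=
        (lintegral_union_le _ _ _).trans (add_le_add hprev (setLIntegral_Ico_paperWeightInvSq_le k))
    _ ≤ 2 * (2 * nbarInv k) ^ 4 + 2 * nbarInv k ^ 4 := by gcongr; exact nbarInv_sub_one_le k
    _ = 34 * nbarInv k ^ 4 := by ring

theorem setLIntegral_Ico_paperWeightInvSq_sub_le {x : ℝ} {m : ℤ} (hx : ⌊x⌋ = m) (n : ℤ) :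
    ∫⁻ t in Ico (n : ℝ) (n + 1), paperWeightInvSq (x - t) ≤ 34 * nbarInv (m - n) ^ 4 := by
  have hx₁ : (m : ℝ) ≤ x := hx ▸ Int.floor_le x
  have hx₂ : x < m + 1 := hx ▸ Int.lt_floor_add_one x
  rw [(Measure.measurePreserving_sub_left volume x).setLIntegral_comp_emb
    (Homeomorph.subLeft x).measurableEmbedding, image_const_sub_Ico]
  refine (lintegral_mono_set fun s hs => ?_).trans
    (setLIntegral_Ico_sub_one_add_one_paperWeightInvSq_le (m - n))
  push_cast
  exact ⟨by linarith [hs.1], by linarith [hs.2]⟩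

theorem setLIntegral_Ico_paperWeightInvSq_mul_sub_le_left {x : ℝ} {m : ℤ} (hx : ⌊x⌋ = m) (n : ℤ) :
    ∫⁻ t in Ico (n : ℝ) (n + 1), paperWeightInvSq t * paperWeightInvSq (x - t) ≤
      8 * nbarInv n ^ 4 * nbarInv (m - n) ^ 2 :=
  calc ∫⁻ t in Ico (n : ℝ) (n + 1), paperWeightInvSq t * paperWeightInvSq (x - t)
      ≤ ∫⁻ t in Ico (n : ℝ) (n + 1), paperWeightInvSq t * (4 * nbarInv (m - n) ^ 2) :=
        setLIntegral_mono' measurableSet_Ico fun t ht => by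
          gcongr; exact paperWeightInvSq_sub_le hx ht
    _ = (∫⁻ t in Ico (n : ℝ) (n + 1), paperWeightInvSq t) * (4 * nbarInv (m - n) ^ 2) :=
        lintegral_mul_const _ measurable_paperWeightInvSq
    _ ≤ 2 * nbarInv n ^ 4 * (4 * nbarInv (m - n) ^ 2) := by
        gcongr; exact setLIntegral_Ico_paperWeightInvSq_le n
    _ = 8 * nbarInv n ^ 4 * nbarInv (m - n) ^ 2 := by ring

theorem setLIntegral_Ico_paperWeightInvSq_mul_sub_le_right {x : ℝ} {m : ℤ} (hx : ⌊x⌋ = m) (n : ℤ) :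
    ∫⁻ t in Ico (n : ℝ) (n + 1), paperWeightInvSq t * paperWeightInvSq (x - t) ≤
      34 * nbarInv n ^ 2 * nbarInv (m - n) ^ 4 :=
  calc ∫⁻ t in Ico (n : ℝ) (n + 1), paperWeightInvSq t * paperWeightInvSq (x - t)
      ≤ ∫⁻ t in Ico (n : ℝ) (n + 1), nbarInv n ^ 2 * paperWeightInvSq (x - t) :=
        setLIntegral_mono' measurableSet_Ico fun t ht => by
          gcongr; exact paperWeightInvSq_le (Int.floor_eq_iff.2 ht)
    _ = nbarInv n ^ 2 * ∫⁻ t in Ico (n : ℝ) (n + 1), paperWeightInvSq (x - t) :=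
        lintegral_const_mul _
          (measurable_paperWeightInvSq.comp (measurable_const.sub measurable_id))
    _ ≤ nbarInv n ^ 2 * (34 * nbarInv (m - n) ^ 4) := by
        gcongr; exact setLIntegral_Ico_paperWeightInvSq_sub_le hx n
    _ = 34 * nbarInv n ^ 2 * nbarInv (m - n) ^ 4 := by ring

theorem setLIntegral_Ico_paperWeightInvSq_mul_sub_le {x : ℝ} {m : ℤ} (hx : ⌊x⌋ = m) (n : ℤ) :
    ∫⁻ t in Ico (n : ℝ) (n + 1), paperWeightInvSq t * paperWeightInvSq (x - t) ≤
      544 * nbarInv m ^ 4 * (nbarInv n ^ 2 + nbarInv (m - n) ^ 2) := by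
  have hm : nbar m ≤ nbar n + nbar (m - n) := by simpa using nbar_add_le n (m - n)
  rcases le_total (nbar (m - n)) (nbar n) with h | h
  · have hn : nbarInv n ≤ 2 * nbarInv m := nbarInv_le_two_mul (by linarith)
    calc _ ≤ 8 * nbarInv n ^ 4 * nbarInv (m - n) ^ 2 :=
          setLIntegral_Ico_paperWeightInvSq_mul_sub_le_left hx n
      _ ≤ 8 * (2 * nbarInv m) ^ 4 * nbarInv (m - n) ^ 2 := by gcongr
      _ ≤ 544 * nbarInv m ^ 4 * (nbarInv n ^ 2 + nbarInv (m - n) ^ 2) := by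
          rw [mul_pow, ← mul_assoc]
          gcongr
          · norm_num
          · exact le_add_self
  · have hmn : nbarInv (m - n) ≤ 2 * nbarInv m := nbarInv_le_two_mul (by linarith)
    calc _ ≤ 34 * nbarInv n ^ 2 * nbarInv (m - n) ^ 4 :=
          setLIntegral_Ico_paperWeightInvSq_mul_sub_le_right hx n
      _ ≤ 34 * nbarInv n ^ 2 * (2 * nbarInv m) ^ 4 := by gcongr
      _ = 544 * nbarInv m ^ 4 * nbarInv n ^ 2 := by ring
      _ ≤ 544 * nbarInv m ^ 4 * (nbarInv n ^ 2 + nbarInv (m - n) ^ 2) := by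
          gcongr; exact le_self_add

theorem lintegral_paperWeightInvSq_mul_sub_le (x : ℝ) :
    ∫⁻ t, paperWeightInvSq t * paperWeightInvSq (x - t) ≤
      1088 * (∑' n : ℤ, nbarInv n ^ 2) * paperWeightInvSq x := by
  rw [← setLIntegral_univ, ← iUnion_Ico_intCast ℝ,
    lintegral_iUnion (fun _ => measurableSet_Ico) (pairwise_disjoint_Ico_intCast ℝ)]
  calc ∑' n : ℤ, ∫⁻ t in Ico (n : ℝ) (n + 1), paperWeightInvSq t * paperWeightInvSq (x - t)
      ≤ ∑' n : ℤ, 544 * nbarInv ⌊x⌋ ^ 4 * (nbarInv n ^ 2 + nbarInv (⌊x⌋ - n) ^ 2) :=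
        ENNReal.tsum_le_tsum fun n => setLIntegral_Ico_paperWeightInvSq_mul_sub_le rfl n
    _ = 1088 * (∑' n : ℤ, nbarInv n ^ 2) * nbarInv ⌊x⌋ ^ 4 := by
        have hshift : ∑' n : ℤ, nbarInv (⌊x⌋ - n) ^ 2 = ∑' n : ℤ, nbarInv n ^ 2 :=
          (Equiv.subLeft ⌊x⌋).tsum_eq fun n => nbarInv n ^ 2
        rw [ENNReal.tsum_mul_left, ENNReal.tsum_add, hshift]
        ring
    _ ≤ 1088 * (∑' n : ℤ, nbarInv n ^ 2) * paperWeightInvSq x := by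
        gcongr; exact nbarInv_pow_four_le_paperWeightInvSq rfl

theorem toReal_paperWeightInvSq (t : ℝ) : (paperWeightInvSq t).toReal = (paperWeight t ^ 2)⁻¹ := by
  rw [paperWeightInvSq, ← ENNReal.inv_pow, toReal_inv, toReal_pow, toReal_enorm,
    Real.norm_of_nonneg (paperWeight_pos t).le]

theorem paperWeightInvSq_ne_top (t : ℝ) : paperWeightInvSq t ≠ ∞ :=
  pow_ne_top (inv_ne_top.2 (enorm_ne_zero.2 (paperWeight_pos t).ne'))

theorem paperWeight_L2_algebra :
    ∃ C : ℝ, 0 < C ∧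
      (∀ᵐ x : ℝ, (∫ t : ℝ, (paperWeight t ^ 2)⁻¹ * (paperWeight (x - t) ^ 2)⁻¹) ≤
          C * (paperWeight x ^ 2)⁻¹) ∧
      ∀ f g : ℝ → ℝ,
        MemLp (fun x => f x * paperWeight x) 2 (volume : Measure ℝ) →
        MemLp (fun x => g x * paperWeight x) 2 (volume : Measure ℝ) →
        MemLp (fun x => (∫ t : ℝ, f t * g (x - t)) * paperWeight x) 2
          (volume : Measure ℝ) := by
  set C : ℝ≥0∞ := 1088 * ∑' n : ℤ, nbarInv n ^ 2
  have hC_top : C ≠ ∞ := mul_ne_top ofNat_ne_top tsum_nbarInv_sq_ne_top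
  have hC_zero : C ≠ 0 := mul_ne_zero (by norm_num) fun h => by
    simpa [nbarInv_zero] using ENNReal.tsum_eq_zero.1 h 0
  have hkey : ∀ x, ∫⁻ t, paperWeightInvSq t * paperWeightInvSq (x - t) ≤ C * paperWeightInvSq x :=
    lintegral_paperWeightInvSq_mul_sub_le
  refine ⟨C.toReal, toReal_pos hC_zero hC_top, Filter.Eventually.of_forall fun x => ?_,
    fun f g hf hg => memLp_convolution_mul_weight measurable_paperWeight.aestronglyMeasurable
      (fun x => (paperWeight_pos x).ne') hC_top (Filter.Eventually.of_forall hkey) hf hg⟩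
  calc ∫ t, (paperWeight t ^ 2)⁻¹ * (paperWeight (x - t) ^ 2)⁻¹
      = (∫⁻ t, paperWeightInvSq t * paperWeightInvSq (x - t)).toReal := by
        simp only [← toReal_paperWeightInvSq, ← toReal_mul]
        refine integral_toReal ?_ (Filter.Eventually.of_forall fun t => ?_)
        · exact (measurable_paperWeightInvSq.mul
            (measurable_paperWeightInvSq.comp (measurable_const.sub measurable_id))).aemeasurable
        · exact (mul_ne_top (paperWeightInvSq_ne_top t) (paperWeightInvSq_ne_top (x - t))).lt_top
    _ ≤ (C * paperWeightInvSq x).toReal :=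
        toReal_mono (mul_ne_top hC_top (paperWeightInvSq_ne_top x)) (hkey x)
    _ = C.toReal * (paperWeight x ^ 2)⁻¹ := by rw [toReal_mul, toReal_paperWeightInvSq]
end
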